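/- arXiv:2409.14845 — 5 statements merged into one kernel-verified Lean document; each statement's English description precedes it below -/
import Mathlib

section
/- For every m ∈ ℕ, the inner product ⟨e_m³, e_m⟩ in L²([0,π], sin²(x)(2/π)dx) equals ω_m = m+1. Equivalently, (2/π)∫₀^π sin⁴((m+1)x)/sin²(x) dx = m+1. -/
open Real intervalIntegral Finset

/-- The spherically symmetric eigenfunctions `e_j(x) = sin((j+1)x)/sin x` on `(0,π)`. -/
noncomputable def sphEig (j : ℕ) (x : ℝ) : ℝ := Real.sin (((j : ℝ) + 1) * x) / Real.sin x

lemma cos_int_integral (c : ℤ) (hc : (c:ℝ) ≠ 0) :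
    ∫ x in (0:ℝ)..π, Real.cos ((c:ℝ) * x) = 0 := by
  rw [intervalIntegral.integral_comp_mul_left (fun x => Real.cos x) hc]
  simp [Real.sin_int_mul_pi]

lemma sin_orth (l k : ℕ) :
    ∫ x in (0:ℝ)..π, Real.sin ((2*(l:ℝ)+1)*x) * Real.sin ((2*(k:ℝ)+1)*x)
      = if l = k then π/2 else 0 := by
  have hid : ∀ x : ℝ, Real.sin ((2*(l:ℝ)+1)*x) * Real.sin ((2*(k:ℝ)+1)*x)
      = (Real.cos ((2*(l:ℝ)-2*(k:ℝ))*x) - Real.cos ((2*(l:ℝ)+2*(k:ℝ)+2)*x)) / 2 := by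
    intro x
    have h := Real.two_mul_sin_mul_sin ((2*(l:ℝ)+1)*x) ((2*(k:ℝ)+1)*x)
    have e1 : (2*(l:ℝ)+1)*x - (2*(k:ℝ)+1)*x = (2*(l:ℝ)-2*(k:ℝ))*x := by ring
    have e2 : (2*(l:ℝ)+1)*x + (2*(k:ℝ)+1)*x = (2*(l:ℝ)+2*(k:ℝ)+2)*x := by ring
    rw [e1, e2] at h
    linarith
  simp_rw [hid]
  rw [intervalIntegral.integral_div,
    intervalIntegral.integral_sub (Continuous.intervalIntegrable (by fun_prop) 0 Real.pi) (Continuous.intervalIntegrable (by fun_prop) 0 Real.pi)]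
  have h2 : ∫ x in (0:ℝ)..π, Real.cos ((2*(l:ℝ)+2*(k:ℝ)+2)*x) = 0 := by
    have hc : ((2*(l:ℤ)+2*(k:ℤ)+2 : ℤ):ℝ) ≠ 0 := by push_cast; positivity
    have := cos_int_integral (2*(l:ℤ)+2*(k:ℤ)+2) hc
    have hcast : ((2*(l:ℤ)+2*(k:ℤ)+2 : ℤ):ℝ) = 2*(l:ℝ)+2*(k:ℝ)+2 := by push_cast; ring
    rwa [hcast] at this
  rw [h2]
  by_cases h : l = k
  · subst h
    rw [show (2*(l:ℝ)-2*(l:ℝ)) = 0 by ring]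
    simp [Real.pi_pos.le]
  · have hlk : ((2*(l:ℤ)-2*(k:ℤ) : ℤ):ℝ) ≠ 0 := by
      push_cast
      intro hz
      apply h
      have : (l:ℝ) = (k:ℝ) := by linarith
      exact_mod_cast this
    have := cos_int_integral (2*(l:ℤ)-2*(k:ℤ)) hlk
    have hcast : ((2*(l:ℤ)-2*(k:ℤ) : ℤ):ℝ) = 2*(l:ℝ)-2*(k:ℝ) := by push_cast; ring
    rw [hcast] at this
    rw [this]
    simp [h]

lemma key_step (a x : ℝ) :
    Real.sin (a + x)^2 = Real.sin a^2 + Real.sin x * Real.sin (2*a + x) := by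
  have h1 : (2:ℝ)*a + x = (a+x) + a := by ring
  rw [h1, Real.sin_add (a+x) a, Real.sin_add a x, Real.cos_add a x]
  nlinarith [Real.sin_sq_add_cos_sq a, Real.sin_sq_add_cos_sq x]

lemma fejer (n : ℕ) (x : ℝ) :
    Real.sin ((n:ℝ)*x)^2 = Real.sin x * ∑ l ∈ Finset.range n, Real.sin ((2*(l:ℝ)+1)*x) := by
  induction n with
  | zero => simp
  | succ n ih =>
    rw [Finset.sum_range_succ, mul_add, ← ih]
    push_cast
    rw [show ((n:ℝ)+1)*x = (n:ℝ)*x + x by ring,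
        show (2*(n:ℝ)+1)*x = 2*((n:ℝ)*x) + x by ring]
    exact key_step ((n:ℝ)*x) x

lemma int_S_sq (n : ℕ) :
    ∫ x in (0:ℝ)..π, (∑ l ∈ Finset.range n, Real.sin ((2*(l:ℝ)+1)*x))^2
      = n * (π/2) := by
  have hexp : ∀ x : ℝ, (∑ l ∈ Finset.range n, Real.sin ((2*(l:ℝ)+1)*x))^2
      = ∑ l ∈ Finset.range n, ∑ k ∈ Finset.range n,
          Real.sin ((2*(l:ℝ)+1)*x) * Real.sin ((2*(k:ℝ)+1)*x) := by
    intro x; rw [sq, Finset.sum_mul_sum]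
  simp_rw [hexp]
  rw [intervalIntegral.integral_finset_sum (fun l _ =>
    Continuous.intervalIntegrable (continuous_finset_sum _ (fun k _ => by fun_prop)) 0 Real.pi)]
  have : ∀ l ∈ Finset.range n,
      (∫ x in (0:ℝ)..π, ∑ k ∈ Finset.range n,
        Real.sin ((2*(l:ℝ)+1)*x) * Real.sin ((2*(k:ℝ)+1)*x)) = π/2 := by
    intro l hl
    rw [intervalIntegral.integral_finset_sum (fun k _ => Continuous.intervalIntegrable (by fun_prop) 0 Real.pi)]
    have : ∀ k ∈ Finset.range n,
        (∫ x in (0:ℝ)..π, Real.sin ((2*(l:ℝ)+1)*x) * Real.sin ((2*(k:ℝ)+1)*x))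
          = if l = k then π/2 else 0 := fun k _ => sin_orth l k
    rw [Finset.sum_congr rfl this, Finset.sum_ite_eq (Finset.range n) l (fun _ => π/2)]
    simp [hl]
  rw [Finset.sum_congr rfl this]
  simp [mul_comm]

/-- `⟨e_m³, e_m⟩ = ω_m = m+1` in `L²([0,π], sin²x·(2/π)dx)`;
equivalently `(2/π)∫₀^π sin⁴((m+1)x)/sin²x dx = m+1`. -/
theorem stmt3 (m : ℕ) :
    (2 / Real.pi) * ∫ x in (0:ℝ)..Real.pi,
        (sphEig m x) ^ 3 * sphEig m x * Real.sin x ^ 2 = (m : ℝ) + 1 ∧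
    (2 / Real.pi) * ∫ x in (0:ℝ)..Real.pi,
        Real.sin (((m : ℝ) + 1) * x) ^ 4 / Real.sin x ^ 2 = (m : ℝ) + 1 := by
  have hπ := Real.pi_pos
  have heq2 : ∀ x ∈ Set.uIcc (0:ℝ) π,
      Real.sin (((m:ℝ)+1)*x)^4 / Real.sin x^2
        = (∑ l ∈ Finset.range (m+1), Real.sin ((2*(l:ℝ)+1)*x))^2 := by
    intro x hx
    by_cases hs : Real.sin x = 0
    · rw [Set.uIcc_of_le hπ.le] at hx
      have hx0 : x = 0 ∨ x = π := by
        by_contra hcon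
        push_neg at hcon
        have hpos := Real.sin_pos_of_pos_of_lt_pi
          (lt_of_le_of_ne hx.1 (Ne.symm hcon.1)) (lt_of_le_of_ne hx.2 hcon.2)
        rw [hs] at hpos; exact lt_irrefl 0 hpos
      rcases hx0 with rfl | rfl
      · simp
      · rw [hs]
        have hsum : ∀ l ∈ Finset.range (m+1), Real.sin ((2*(l:ℝ)+1)*π) = 0 := by
          intro l _
          have : (2*(l:ℝ)+1)*π = ((2*l+1 : ℕ):ℝ)*π := by push_cast; ring
          rw [this, Real.sin_nat_mul_pi]
        rw [Finset.sum_eq_zero hsum]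
        have : Real.sin (((m:ℝ)+1)*π) = 0 := by
          have : ((m:ℝ)+1)*π = ((m+1 : ℕ):ℝ)*π := by push_cast; ring
          rw [this, Real.sin_nat_mul_pi]
        rw [this]
        simp
    · have hf := fejer (m+1) x
      push_cast at hf
      have h4 : Real.sin (((m:ℝ)+1)*x)^4
          = Real.sin x^2 * (∑ l ∈ Finset.range (m+1), Real.sin ((2*(l:ℝ)+1)*x))^2 := by
        calc Real.sin (((m:ℝ)+1)*x)^4 = (Real.sin (((m:ℝ)+1)*x)^2)^2 := by ring
        _ = _ := by rw [hf]; ring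
      rw [h4, mul_div_cancel_left₀ _ (pow_ne_zero 2 hs)]
  have main : (2 / Real.pi) * ∫ x in (0:ℝ)..Real.pi,
      Real.sin (((m : ℝ) + 1) * x) ^ 4 / Real.sin x ^ 2 = (m : ℝ) + 1 := by
    rw [intervalIntegral.integral_congr heq2, int_S_sq]
    push_cast
    field_simp
  refine ⟨?_, main⟩
  have heq1 : ∀ x : ℝ, (sphEig m x) ^ 3 * sphEig m x * Real.sin x ^ 2
      = Real.sin (((m : ℝ) + 1) * x) ^ 4 / Real.sin x ^ 2 := by
    intro x
    unfold sphEig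
    by_cases hs : Real.sin x = 0
    · simp [hs]
    · field_simp
  simp_rw [heq1]
  exact main
end

section
/- For m, j ∈ ℕ with j ≤ 2m, the inner product ⟨e_m² e_j, e_{2m-j}⟩ in L²([0,π], sin²(x)(2/π)dx) equals ω_{min(j, 2m-j)} = min(j, 2m-j) + 1. -/
open Real MeasureTheory intervalIntegral

lemma intcos (c : ℝ) (hc : c ≠ 0) : ∫ x in (0:ℝ)..π, Real.cos (c * x) = Real.sin (c * π) / c := by
  rw [intervalIntegral.integral_comp_mul_left Real.cos hc, integral_cos]
  simp [smul_eq_mul]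
  ring

lemma sin_mul_sin2 (A B x : ℝ) :
    Real.sin (A * x) * Real.sin (B * x) = (Real.cos ((A - B) * x) - Real.cos ((A + B) * x)) / 2 := by
  have h := Real.cos_sub_cos ((A - B) * x) ((A + B) * x)
  have h1 : ((A - B) * x + (A + B) * x) / 2 = A * x := by ring
  have h2 : ((A - B) * x - (A + B) * x) / 2 = -(B * x) := by ring
  rw [h1, h2, Real.sin_neg] at h
  rw [h]; ring

lemma telescope (c : ℝ) (k : ℕ) (x : ℝ) :
    (∑ ℓ ∈ Finset.range (k + 1), Real.sin ((c + 1 + 2 * ℓ) * x)) * Real.sin x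
      = Real.sin ((c + k + 1) * x) * Real.sin (((k : ℝ) + 1) * x) := by
  rw [Finset.sum_mul]
  have hterm : ∀ ℓ ∈ Finset.range (k + 1), Real.sin ((c + 1 + 2 * ℓ) * x) * Real.sin x
      = ((fun ℓ : ℕ => Real.cos ((c + 2 * ℓ) * x)) ℓ
          - (fun ℓ : ℕ => Real.cos ((c + 2 * ℓ) * x)) (ℓ + 1)) / 2 := by
    intro ℓ _
    have := sin_mul_sin2 (c + 1 + 2 * ℓ) 1 x
    simp only [one_mul] at this
    rw [this]
    push_cast
    ring_nf
  rw [Finset.sum_congr rfl hterm, ← Finset.sum_div, Finset.sum_range_sub',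
    sin_mul_sin2 (c + k + 1) ((k : ℝ) + 1) x]
  push_cast
  ring_nf

lemma orth (p q : ℕ) :
    ∫ x in (0:ℝ)..π, Real.sin (((p:ℝ) + 1) * x) * Real.sin (((q:ℝ) + 1) * x)
      = if p = q then π / 2 else 0 := by
  have hint : ∀ x, Real.sin (((p:ℝ) + 1) * x) * Real.sin (((q:ℝ) + 1) * x)
      = (Real.cos (((p:ℝ) - q) * x) - Real.cos (((p:ℝ) + q + 2) * x)) / 2 := by
    intro x
    rw [sin_mul_sin2 ((p:ℝ)+1) ((q:ℝ)+1) x]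
    ring_nf
  simp only [hint]
  rw [intervalIntegral.integral_div]
  rw [intervalIntegral.integral_sub (by apply Continuous.intervalIntegrable; fun_prop)
    (by apply Continuous.intervalIntegrable; fun_prop)]
  have h2 : ∫ x in (0:ℝ)..π, Real.cos (((p:ℝ) + q + 2) * x) = 0 := by
    rw [intcos _ (by positivity)]
    have : ((p:ℝ) + q + 2) * π = ((p + q + 2 : ℤ) : ℝ) * π := by push_cast; ring
    rw [this, Real.sin_int_mul_pi]
    simp
  rw [h2]
  by_cases hpq : p = q
  · subst hpq
    simp
  · have hne : ((p:ℝ) - q) ≠ 0 := by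
      intro hc
      exact hpq (by exact_mod_cast sub_eq_zero.mp hc)
    rw [intcos _ hne]
    have : ((p:ℝ) - q) * π = ((p - q : ℤ) : ℝ) * π := by push_cast; ring
    rw [this, Real.sin_int_mul_pi]
    simp [hpq]


lemma sphEig_mul (n k : ℕ) (hk : k ≤ n) (x : ℝ) (hx : Real.sin x ≠ 0) :
    sphEig n x * sphEig k x * Real.sin x
      = ∑ ℓ ∈ Finset.range (k + 1), Real.sin ((((n - k : ℕ) : ℝ) + 1 + 2 * ℓ) * x) := by
  have h := telescope (((n - k : ℕ) : ℝ)) k x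
  have hc : ((n - k : ℕ) : ℝ) + k + 1 = (n : ℝ) + 1 := by
    rw [Nat.cast_sub hk]; ring
  rw [hc] at h
  have hs : sphEig n x * sphEig k x * Real.sin x
      = Real.sin (((n:ℝ) + 1) * x) * Real.sin (((k:ℝ) + 1) * x) / Real.sin x := by
    unfold sphEig; field_simp
  rw [hs, div_eq_iff hx]
  exact h.symm

lemma helper (m j : ℕ) (hj : j ≤ m) :
    ∫ x in (0:ℝ)..π,
        (sphEig m x) ^ 2 * sphEig j x * sphEig (2 * m - j) x * Real.sin x ^ 2
      = ((j : ℝ) + 1) * (π / 2) := by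
  have key : ∫ x in (0:ℝ)..π,
        (sphEig m x) ^ 2 * sphEig j x * sphEig (2 * m - j) x * Real.sin x ^ 2
      = ∫ x in (0:ℝ)..π,
        (∑ ℓ ∈ Finset.range (j + 1), Real.sin ((((m - j : ℕ) : ℝ) + 1 + 2 * ℓ) * x))
          * (∑ ℓ ∈ Finset.range (m + 1), Real.sin ((((m - j : ℕ) : ℝ) + 1 + 2 * ℓ) * x)) := by
    apply intervalIntegral.integral_congr_ae
    have hae : ∀ᵐ x : ℝ, x ≠ π := by
      rw [MeasureTheory.ae_iff]
      simp only [not_not]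
      have : {a : ℝ | a = π} = {π} := by ext y; simp
      rw [this, Real.volume_singleton]
    filter_upwards [hae] with x hx hmem
    rw [Set.uIoc_of_le Real.pi_pos.le] at hmem
    have hxlt : x < π := lt_of_le_of_ne hmem.2 hx
    have hsin : Real.sin x ≠ 0 := ne_of_gt (Real.sin_pos_of_pos_of_lt_pi hmem.1 hxlt)
    have e1 := sphEig_mul m j hj x hsin
    have hle2 : m ≤ 2 * m - j := by omega
    have e2 := sphEig_mul (2 * m - j) m hle2 x hsin
    have hsub : 2 * m - j - m = m - j := by omega
    rw [hsub] at e2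
    calc (sphEig m x) ^ 2 * sphEig j x * sphEig (2 * m - j) x * Real.sin x ^ 2
        = (sphEig m x * sphEig j x * Real.sin x)
            * (sphEig (2 * m - j) x * sphEig m x * Real.sin x) := by ring
      _ = _ := by rw [e1, e2]
  rw [key]
  set a := m - j with ha
  have step : ∀ ℓ ℓ' : ℕ, ∫ x in (0:ℝ)..π,
      Real.sin (((a:ℝ) + 1 + 2 * ℓ) * x) * Real.sin (((a:ℝ) + 1 + 2 * ℓ') * x)
      = if ℓ = ℓ' then π / 2 else 0 := by
    intro ℓ ℓ'
    have h1 : ((a:ℝ) + 1 + 2 * ℓ) = ((a + 2 * ℓ : ℕ) : ℝ) + 1 := by push_cast; ring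
    have h2 : ((a:ℝ) + 1 + 2 * ℓ') = ((a + 2 * ℓ' : ℕ) : ℝ) + 1 := by push_cast; ring
    rw [h1, h2, orth]
    by_cases hll : ℓ = ℓ'
    · simp [hll]
    · have : a + 2 * ℓ ≠ a + 2 * ℓ' := by omega
      simp [hll, this]
  have expand : ∀ x : ℝ,
      (∑ ℓ ∈ Finset.range (j + 1), Real.sin (((a:ℝ) + 1 + 2 * ℓ) * x))
        * (∑ ℓ ∈ Finset.range (m + 1), Real.sin (((a:ℝ) + 1 + 2 * ℓ) * x))
      = ∑ ℓ ∈ Finset.range (j + 1), ∑ ℓ' ∈ Finset.range (m + 1),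
          Real.sin (((a:ℝ) + 1 + 2 * ℓ) * x) * Real.sin (((a:ℝ) + 1 + 2 * ℓ') * x) := by
    intro x
    rw [Finset.sum_mul_sum]
  rw [intervalIntegral.integral_congr (fun x _ => expand x)]
  rw [intervalIntegral.integral_finset_sum (fun ℓ _ => by
    apply Continuous.intervalIntegrable; fun_prop)]
  have inner : ∀ ℓ ∈ Finset.range (j + 1),
      (∫ x in (0:ℝ)..π, ∑ ℓ' ∈ Finset.range (m + 1),
          Real.sin (((a:ℝ) + 1 + 2 * ℓ) * x) * Real.sin (((a:ℝ) + 1 + 2 * ℓ') * x))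
        = π / 2 := by
    intro ℓ hℓ
    rw [intervalIntegral.integral_finset_sum (fun ℓ' _ => by
      apply Continuous.intervalIntegrable; fun_prop)]
    rw [Finset.sum_congr rfl (fun ℓ' _ => step ℓ ℓ')]
    rw [Finset.sum_ite_eq]
    have : ℓ ∈ Finset.range (m + 1) := by
      simp only [Finset.mem_range] at *; omega
    simp [this]
  rw [Finset.sum_congr rfl inner]
  simp [Finset.sum_const]

/-- for `j ≤ 2m`, `⟨e_m² e_j, e_{2m-j}⟩ = ω_{min(j,2m-j)} = min(j,2m-j)+1`. -/
theorem stmt5 (m j : ℕ) (h : j ≤ 2 * m) :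
    (2 / Real.pi) * ∫ x in (0:ℝ)..Real.pi,
        (sphEig m x) ^ 2 * sphEig j x * sphEig (2 * m - j) x * Real.sin x ^ 2 =
      (min j (2 * m - j) : ℝ) + 1 := by
  have hπ : (π : ℝ) ≠ 0 := Real.pi_ne_zero
  rcases le_or_gt j m with hj | hj
  · have hmin : (j:ℝ) ⊓ (2 * (m:ℝ) - j) = (j:ℝ) := min_eq_left (by
      have : (j:ℝ) ≤ m := by exact_mod_cast hj
      linarith)
    rw [hmin, helper m j hj]
    field_simp
  · have hj'le : 2 * m - j ≤ m := by omega
    have h2 : 2 * m - (2 * m - j) = j := by omega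
    have hmin : (j:ℝ) ⊓ (2 * (m:ℝ) - j) = 2 * (m:ℝ) - j := min_eq_right (by
      have : (m:ℝ) ≤ j := by exact_mod_cast hj.le
      linarith)
    have hcast : ((2 * m - j : ℕ) : ℝ) = 2 * (m:ℝ) - j := by
      rw [Nat.cast_sub h]; push_cast; ring
    have hh := helper m (2 * m - j) hj'le
    rw [h2] at hh
    have comm : ∀ x ∈ Set.uIcc (0:ℝ) π,
        sphEig m x ^ 2 * sphEig j x * sphEig (2 * m - j) x * Real.sin x ^ 2
          = sphEig m x ^ 2 * sphEig (2 * m - j) x * sphEig j x * Real.sin x ^ 2 :=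
      fun x _ => by ring
    rw [intervalIntegral.integral_congr comm, hh, hcast, hmin]
    field_simp
end

section
/- For m, j ∈ ℕ, ⟨e_m² e_j, e_j⟩ in L²([0,π], sin²(x)(2/π)dx) equals ω_{min(j,m)} = min(j,m) + 1. -/
/-!
For `j ≤ m`, write `m = d + j`. The product rule `e_m e_j = ∑_{ℓ ≤ j} e_{d+2ℓ}` is the identity
`sin((m+1)x) sin((j+1)x) = sin x · ∑_{ℓ ≤ j} sin((d+2ℓ+1)x)`, whose right-hand side telescopes
by `2 sin a sin b = cos(a-b) - cos(a+b)`. Hence `e_m² e_j² sin² x` is the square of a sum of `j+1`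
sines of distinct frequencies, and orthogonality of `sin((n+1)x)` on `[0,π]` gives `(j+1)π/2`.
-/

open Real Finset

lemma integral_cos_int_mul (k : ℤ) :
    ∫ x in (0 : ℝ)..π, cos (k * x) = if k = 0 then π else 0 := by
  split_ifs with hk
  · simp [hk]
  · rw [intervalIntegral.integral_comp_mul_left _ (Int.cast_ne_zero.mpr hk)]
    simp [sin_int_mul_pi]

lemma integral_sin_mul_sin (a b : ℕ) :
    ∫ x in (0 : ℝ)..π, sin ((a + 1) * x) * sin ((b + 1) * x) = if a = b then π / 2 else 0 := by
  have product_to_sum : ∀ x : ℝ, sin ((a + 1) * x) * sin ((b + 1) * x) =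
      (cos (((a - b : ℤ) : ℝ) * x) - cos (((a + b + 2 : ℤ) : ℝ) * x)) / 2 := fun x => by
    push_cast
    rw [show ((a : ℝ) - b) * x = (a + 1) * x - (b + 1) * x by ring,
      show ((a : ℝ) + b + 2) * x = (a + 1) * x + (b + 1) * x by ring, ← two_mul_sin_mul_sin]
    ring
  simp_rw [product_to_sum]
  rw [intervalIntegral.integral_div,
    intervalIntegral.integral_sub (by apply Continuous.intervalIntegrable; fun_prop)
      (by apply Continuous.intervalIntegrable; fun_prop),
    integral_cos_int_mul, integral_cos_int_mul]
  split_ifs <;> first | ring1 | (exfalso; omega)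

lemma integral_sq_sum_sin {ι : Type*} (s : Finset ι) (f : ι → ℕ) (hf : Set.InjOn f s) :
    ∫ x in (0 : ℝ)..π, (∑ i ∈ s, sin ((f i + 1) * x)) ^ 2 = #s * (π / 2) := by
  classical
  simp_rw [sq, sum_mul_sum]
  rw [intervalIntegral.integral_finsetSum fun i _ => by
    apply Continuous.intervalIntegrable; fun_prop]
  have diagonal : ∀ i ∈ s, ∫ x in (0 : ℝ)..π, ∑ k ∈ s, sin ((f i + 1) * x) * sin ((f k + 1) * x)
      = π / 2 := fun i hi => by
    rw [intervalIntegral.integral_finsetSum fun k _ => by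
      apply Continuous.intervalIntegrable; fun_prop]
    simp_rw [integral_sin_mul_sin]
    rw [sum_congr rfl fun k hk => if_congr (hf.eq_iff hi hk) rfl rfl, sum_ite_eq, if_pos hi]
  rw [sum_congr rfl diagonal, sum_const, nsmul_eq_mul]

lemma sin_mul_sum_range_sin_add_two_mul (d n : ℕ) (x : ℝ) :
    sin x * ∑ ℓ ∈ range n, sin (((d + 2 * ℓ : ℕ) + 1) * x)
      = (cos (d * x) - cos ((d + 2 * n : ℕ) * x)) / 2 := by
  have telescoping : ∀ ℓ : ℕ, sin x * sin (((d + 2 * ℓ : ℕ) + 1) * x) =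
      (cos ((d + 2 * ℓ : ℕ) * x) - cos ((d + 2 * (ℓ + 1) : ℕ) * x)) / 2 := fun ℓ => by
    push_cast
    rw [show ((d : ℝ) + 2 * ℓ) * x = ((d + 2 * ℓ) + 1) * x - x by ring,
      show ((d : ℝ) + 2 * (ℓ + 1)) * x = ((d + 2 * ℓ) + 1) * x + x by ring, ← two_mul_sin_mul_sin]
    ring
  rw [mul_sum, sum_congr rfl fun ℓ _ => telescoping ℓ, ← sum_div,
    sum_range_sub' (fun ℓ => cos ((d + 2 * ℓ : ℕ) * x)), Nat.mul_zero, Nat.add_zero]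

lemma sin_mul_sin_eq_sin_mul_sum (d j : ℕ) (x : ℝ) :
    sin (((d + j : ℕ) + 1) * x) * sin ((j + 1) * x)
      = sin x * ∑ ℓ ∈ range (j + 1), sin (((d + 2 * ℓ : ℕ) + 1) * x) := by
  rw [sin_mul_sum_range_sin_add_two_mul]
  push_cast
  rw [show (d : ℝ) * x = ((d + j) + 1) * x - (j + 1) * x by ring,
    show ((d : ℝ) + 2 * (j + 1)) * x = ((d + j) + 1) * x + (j + 1) * x by ring,
    ← two_mul_sin_mul_sin]
  ring

lemma sin_nat_add_one_mul_eq_zero {x : ℝ} (hx : sin x = 0) (n : ℕ) : sin ((n + 1) * x) = 0 := by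
  rw [← Int.cast_natCast, ← Polynomial.Chebyshev.U_real_cos, hx, mul_zero]

-- Also where `sin x = 0`: there `sphEig` is `0` by division by zero, and so is every summand.
lemma sphEig_add_mul_sphEig_mul_sin (d j : ℕ) (x : ℝ) :
    sphEig (d + j) x * sphEig j x * sin x =
      ∑ ℓ ∈ range (j + 1), sin (((d + 2 * ℓ : ℕ) + 1) * x) := by
  by_cases hx : sin x = 0
  · rw [hx, mul_zero, eq_comm]
    exact sum_eq_zero fun ℓ _ => sin_nat_add_one_mul_eq_zero hx _
  · rw [sphEig, sphEig, div_mul_div_comm, sin_mul_sin_eq_sin_mul_sum, ← div_div,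
      mul_div_cancel_left₀ _ hx, div_mul_cancel₀ _ hx]

lemma integral_sphEig_add_sq_mul_sphEig_sq (d j : ℕ) :
    (2 / π) * ∫ x in (0 : ℝ)..π, sphEig (d + j) x ^ 2 * sphEig j x ^ 2 * sin x ^ 2 = j + 1 := by
  have integrand : ∀ x, sphEig (d + j) x ^ 2 * sphEig j x ^ 2 * sin x ^ 2
      = (∑ ℓ ∈ range (j + 1), sin (((d + 2 * ℓ : ℕ) + 1) * x)) ^ 2 := fun x => by
    rw [← sphEig_add_mul_sphEig_mul_sin]; ring
  have frequencies_distinct : Set.InjOn (fun ℓ => d + 2 * ℓ) (range (j + 1)) :=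
    fun a _ b _ h => by simp only at h; omega
  simp_rw [integrand]
  rw [integral_sq_sum_sin _ _ frequencies_distinct, card_range]
  field_simp
  push_cast
  ring

/-- `⟨e_m² e_j, e_j⟩ = ω_{min(j,m)} = min(j,m)+1`. -/
theorem stmt6 (m j : ℕ) :
    (2 / Real.pi) * ∫ x in (0:ℝ)..Real.pi,
        (sphEig m x) ^ 2 * (sphEig j x) ^ 2 * Real.sin x ^ 2 =
      (min j m : ℝ) + 1 := by
  rcases le_total j m with h | h
  · obtain ⟨d, rfl⟩ := Nat.exists_eq_add_of_le' h
    rw [min_eq_left (by exact_mod_cast h), integral_sphEig_add_sq_mul_sphEig_sq]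
  · obtain ⟨d, rfl⟩ := Nat.exists_eq_add_of_le' h
    rw [min_eq_right (by exact_mod_cast h)]
    simp_rw [mul_comm (sphEig m _ ^ 2)]
    exact integral_sphEig_add_sq_mul_sphEig_sq d m
end

section
/- The function v̄_m(t,x) = α_m cos(ω_m t) e_m(x) with α_m = ±√(4ω_m/3), ω_m = m+1, e_m(x) = sin((m+1)x)/sin(x), solves the resonant system A v = Π_V(v³), i.e., α_m ω_m² cos(ω_m t) e_m(x) = Π_V(v̄_m³), where Π_V is the L²-orthogonal projection onto the kernel V of -∂_tt - A. -/
open Real MeasureTheory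

lemma abs_sin_nat_mul_le (n : ℕ) (x : ℝ) : |sin (n * x)| ≤ n * |sin x| := by
  induction n with
  | zero => simp
  | succ n ih =>
    have hsplit : sin (((n + 1 : ℕ) : ℝ) * x) = sin (n * x) * cos x + cos (n * x) * sin x := by
      push_cast; rw [add_mul, one_mul, sin_add]
    rw [hsplit]
    calc |sin (n * x) * cos x + cos (n * x) * sin x|
        ≤ |sin (n * x)| * |cos x| + |cos (n * x)| * |sin x| := by
          rw [← abs_mul, ← abs_mul]; exact abs_add_le _ _
      _ ≤ |sin (n * x)| * 1 + 1 * |sin x| := by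
          gcongr <;> exact abs_cos_le_one _
      _ ≤ ((n + 1 : ℕ) : ℝ) * |sin x| := by push_cast; linarith

lemma abs_sin_nat_mul_div_sin_le (n : ℕ) (x : ℝ) : |sin (n * x) / sin x| ≤ n := by
  rcases eq_or_ne (sin x) 0 with hx | hx
  · simp [hx]
  · rw [abs_div, div_le_iff₀ (abs_pos.mpr hx)]
    exact abs_sin_nat_mul_le n x

lemma intervalIntegrable_of_abs_le {f : ℝ → ℝ} {a b C : ℝ} (hf : Measurable f)
    (hC : ∀ x, |f x| ≤ C) : IntervalIntegrable f volume a b := by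
  rw [intervalIntegrable_iff]
  exact Measure.integrableOn_of_bounded measure_Ioc_lt_top.ne hf.aestronglyMeasurable
    (ae_of_all _ hC)

lemma intervalIntegrable_sin_nat_mul_div_sin (n : ℕ) (a b : ℝ) :
    IntervalIntegrable (fun x ↦ sin (n * x) / sin x) volume a b :=
  intervalIntegrable_of_abs_le (by fun_prop) (abs_sin_nat_mul_div_sin_le n)

lemma intervalIntegrable_sin_nat_mul_sq_div_sin_sq (n : ℕ) (a b : ℝ) :
    IntervalIntegrable (fun x ↦ sin (n * x) ^ 2 / sin x ^ 2) volume a b := by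
  refine intervalIntegrable_of_abs_le (C := (n : ℝ) ^ 2) (by fun_prop) fun x ↦ ?_
  rw [← div_pow, abs_pow]
  exact pow_le_pow_left₀ (abs_nonneg _) (abs_sin_nat_mul_div_sin_le n x) 2

lemma integral_congr_of_sin_ne_zero {f g : ℝ → ℝ} (h : ∀ x, sin x ≠ 0 → f x = g x) :
    ∫ x in (0 : ℝ)..π, f x = ∫ x in (0 : ℝ)..π, g x := by
  refine intervalIntegral.integral_congr_ae ?_
  filter_upwards [(Set.countable_singleton π).ae_notMem volume] with x hxπ hx
  rw [Set.uIoc_of_le pi_pos.le] at hx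
  exact h x (sin_pos_of_pos_of_lt_pi hx.1 (lt_of_le_of_ne hx.2 hxπ)).ne'

lemma integral_cos_mul_eq_zero {c b : ℝ} (hc : c ≠ 0) (hb : sin (c * b) = 0) :
    ∫ x in (0 : ℝ)..b, cos (c * x) = 0 := by
  simp [intervalIntegral.integral_comp_mul_left cos hc, integral_cos, hb]

lemma integral_sin_odd_mul_div_sin (n : ℕ) :
    ∫ x in (0 : ℝ)..π, sin (((2 * n + 1 : ℕ) : ℝ) * x) / sin x = π := by
  induction n with
  | zero => simp [integral_congr_of_sin_ne_zero (g := fun _ ↦ 1) fun x hx ↦ div_self hx]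
  | succ n ih =>
    have hstep : ∀ x, sin x ≠ 0 → sin (((2 * (n + 1) + 1 : ℕ) : ℝ) * x) / sin x
        = sin (((2 * n + 1 : ℕ) : ℝ) * x) / sin x + 2 * cos ((2 * n + 2) * x) := by
      intro x hx
      have h := sin_sub_sin ((2 * n + 3) * x) ((2 * n + 1) * x)
      rw [show ((2 * n + 3) * x - (2 * n + 1) * x) / 2 = x by ring,
        show ((2 * n + 3) * x + (2 * n + 1) * x) / 2 = (2 * n + 2) * x by ring] at h
      push_cast
      rw [show 2 * ((n : ℝ) + 1) + 1 = 2 * n + 3 by ring, div_add' _ _ _ hx, div_left_inj' hx]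
      linear_combination h
    have hcos : ∫ x in (0 : ℝ)..π, cos ((2 * n + 2) * x) = 0 :=
      integral_cos_mul_eq_zero (by positivity) (by
        simpa using sin_nat_mul_pi (2 * n + 2))
    rw [integral_congr_of_sin_ne_zero hstep, intervalIntegral.integral_add
      (intervalIntegrable_sin_nat_mul_div_sin _ _ _)
      ((by fun_prop : Continuous fun x ↦ 2 * cos ((2 * n + 2) * x)).intervalIntegrable _ _),
      intervalIntegral.integral_const_mul, hcos, ih, mul_zero, add_zero]

lemma sin_sq_sub_sin_sq (a b : ℝ) : sin a ^ 2 - sin b ^ 2 = sin (a + b) * sin (a - b) := by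
  rw [sin_add, sin_sub]
  linear_combination sin b ^ 2 * sin_sq_add_cos_sq a - sin a ^ 2 * sin_sq_add_cos_sq b

lemma integral_sin_nat_mul_sq_div_sin_sq (n : ℕ) :
    ∫ x in (0 : ℝ)..π, sin (n * x) ^ 2 / sin x ^ 2 = n * π := by
  induction n with
  | zero => simp
  | succ n ih =>
    have hstep : ∀ x, sin x ≠ 0 → sin (((n + 1 : ℕ) : ℝ) * x) ^ 2 / sin x ^ 2
        = sin (n * x) ^ 2 / sin x ^ 2 + sin (((2 * n + 1 : ℕ) : ℝ) * x) / sin x := by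
      intro x hx
      have h := sin_sq_sub_sin_sq ((n + 1) * x) (n * x)
      rw [show (n + 1) * x + n * x = (2 * n + 1) * x by ring,
        show (n + 1) * x - n * x = x by ring] at h
      push_cast
      rw [div_add_div _ _ (pow_ne_zero 2 hx) hx,
        div_eq_div_iff (pow_ne_zero 2 hx) (mul_ne_zero (pow_ne_zero 2 hx) hx)]
      linear_combination sin x ^ 3 * h
    rw [integral_congr_of_sin_ne_zero hstep, intervalIntegral.integral_add
      (intervalIntegrable_sin_nat_mul_sq_div_sin_sq _ _ _)
      (intervalIntegrable_sin_nat_mul_div_sin _ _ _), ih, integral_sin_odd_mul_div_sin]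
    push_cast
    ring

lemma integral_sin_nat_mul_pow_four_div_sin_sq (n : ℕ) :
    ∫ x in (0 : ℝ)..π, sin (n * x) ^ 4 / sin x ^ 2 = n * π / 2 := by
  have hpow : ∀ x, sin (n * x) ^ 4 / sin x ^ 2
      = sin (n * x) ^ 2 / sin x ^ 2
        - (1 / 4) * (sin (((2 * n : ℕ) : ℝ) * x) ^ 2 / sin x ^ 2) := by
    intro x
    rw [show ((2 * n : ℕ) : ℝ) * x = 2 * (n * x) by push_cast; ring, sin_two_mul]
    linear_combination (sin (n * x) ^ 2 / sin x ^ 2) * sin_sq_add_cos_sq (n * x)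
  simp_rw [hpow]
  rw [intervalIntegral.integral_sub (intervalIntegrable_sin_nat_mul_sq_div_sin_sq _ _ _)
    ((intervalIntegrable_sin_nat_mul_sq_div_sin_sq _ _ _).const_mul _),
    intervalIntegral.integral_const_mul, integral_sin_nat_mul_sq_div_sin_sq,
    integral_sin_nat_mul_sq_div_sin_sq]
  push_cast
  ring

lemma integral_sin_nat_mul_pow_three_mul_sin_three_mul_div_sin_sq (n : ℕ) :
    ∫ x in (0 : ℝ)..π, sin (n * x) ^ 3 * sin (3 * n * x) / sin x ^ 2 = 0 := by
  have hprod : ∀ x, sin (n * x) ^ 3 * sin (3 * n * x) / sin x ^ 2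
      = (3 / 4) * (sin (((2 * n : ℕ) : ℝ) * x) ^ 2 / sin x ^ 2)
        - (3 / 4) * (sin (n * x) ^ 2 / sin x ^ 2)
        - (1 / 4) * (sin (((3 * n : ℕ) : ℝ) * x) ^ 2 / sin x ^ 2) := by
    intro x
    rw [show ((2 * n : ℕ) : ℝ) * x = 2 * (n * x) by push_cast; ring,
      show ((3 * n : ℕ) : ℝ) * x = 3 * (n * x) by push_cast; ring,
      show 3 * (n : ℝ) * x = 3 * (n * x) by ring, sin_two_mul, sin_three_mul]
    linear_combination (-3 * sin (n * x) ^ 2 / sin x ^ 2) * sin_sq_add_cos_sq (n * x)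
  have hI (k : ℕ) (c : ℝ) :
      IntervalIntegrable (fun x ↦ c * (sin (k * x) ^ 2 / sin x ^ 2)) volume 0 π :=
    (intervalIntegrable_sin_nat_mul_sq_div_sin_sq k 0 π).const_mul c
  simp_rw [hprod]
  rw [intervalIntegral.integral_sub ((hI _ _).sub (hI _ _)) (hI _ _),
    intervalIntegral.integral_sub (hI _ _) (hI _ _),
    intervalIntegral.integral_const_mul, intervalIntegral.integral_const_mul,
    intervalIntegral.integral_const_mul, integral_sin_nat_mul_sq_div_sin_sq,
    integral_sin_nat_mul_sq_div_sin_sq, integral_sin_nat_mul_sq_div_sin_sq]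
  push_cast
  ring

lemma integral_cos_int_mul_eq_zero {k : ℤ} (hk : k ≠ 0) :
    ∫ t in (0 : ℝ)..2 * π, cos (k * t) = 0 :=
  integral_cos_mul_eq_zero (by exact_mod_cast hk) (by
    simpa [mul_left_comm, mul_assoc] using sin_int_mul_pi (2 * k))

lemma integral_cos_nat_mul_mul_cos_nat_mul {p q : ℕ} (hq : 0 < q) :
    ∫ t in (0 : ℝ)..2 * π, cos (p * t) * cos (q * t) = if p = q then π else 0 := by
  have hprod : ∀ t, cos (p * t) * cos (q * t)
      = (1 / 2) * cos (((p + q : ℤ) : ℝ) * t) + (1 / 2) * cos (((p - q : ℤ) : ℝ) * t) := by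
    intro t
    push_cast
    rw [add_mul, sub_mul, cos_add, cos_sub]
    ring
  simp_rw [hprod]
  rw [intervalIntegral.integral_add (Continuous.intervalIntegrable (by fun_prop) _ _)
    (Continuous.intervalIntegrable (by fun_prop) _ _),
    intervalIntegral.integral_const_mul, intervalIntegral.integral_const_mul,
    integral_cos_int_mul_eq_zero (by omega)]
  split_ifs with hpq
  · simp [hpq]
  · rw [integral_cos_int_mul_eq_zero (by omega)]
    ring

lemma integral_cos_nat_mul_mul_cos_nat_mul_pow_three {p q : ℕ} (hq : 0 < q) :
    ∫ t in (0 : ℝ)..2 * π, cos (p * t) * cos (q * t) ^ 3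
      = (3 / 4) * (if p = q then π else 0) + (1 / 4) * (if p = 3 * q then π else 0) := by
  have hprod : ∀ t, cos (p * t) * cos (q * t) ^ 3
      = (3 / 4) * (cos (p * t) * cos (q * t))
        + (1 / 4) * (cos (p * t) * cos (((3 * q : ℕ) : ℝ) * t)) := by
    intro t
    rw [show ((3 * q : ℕ) : ℝ) * t = 3 * (q * t) by push_cast; ring, cos_three_mul]
    ring
  simp_rw [hprod]
  rw [intervalIntegral.integral_add (Continuous.intervalIntegrable (by fun_prop) _ _)
    (Continuous.intervalIntegrable (by fun_prop) _ _),
    intervalIntegral.integral_const_mul, intervalIntegral.integral_const_mul,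
    integral_cos_nat_mul_mul_cos_nat_mul hq, integral_cos_nat_mul_mul_cos_nat_mul (by omega)]

lemma integral_sphEig_pow_three_mul_self_mul_sin_sq (m : ℕ) :
    ∫ x in (0 : ℝ)..π, sphEig m x ^ 3 * sphEig m x * sin x ^ 2 = (m + 1) * π / 2 := by
  rw [integral_congr_of_sin_ne_zero (g := fun x ↦ sin (((m + 1 : ℕ) : ℝ) * x) ^ 4 / sin x ^ 2)
    fun x hx ↦ by unfold sphEig; push_cast; field_simp, integral_sin_nat_mul_pow_four_div_sin_sq]
  push_cast
  ring

lemma integral_sphEig_pow_three_mul_sphEig_three_mul_add_two_mul_sin_sq (m : ℕ) :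
    ∫ x in (0 : ℝ)..π, sphEig m x ^ 3 * sphEig (3 * m + 2) x * sin x ^ 2 = 0 := by
  rw [integral_congr_of_sin_ne_zero (g := fun x ↦
      sin (((m + 1 : ℕ) : ℝ) * x) ^ 3 * sin (3 * ((m + 1 : ℕ) : ℝ) * x) / sin x ^ 2)
    fun x hx ↦ by unfold sphEig; push_cast; field_simp; ring_nf,
    integral_sin_nat_mul_pow_three_mul_sin_three_mul_div_sin_sq]

/-- `v̄_m(t,x) = α_m cos(ω_m t) e_m(x)` with `α_m² = 4ω_m/3` solves the
resonant system `A v = Π_V(v³)`: componentwise, for every `j`, the projection coefficient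
of `v̄_m³` on `cos(ω_j t) e_j(x)` equals the corresponding coefficient `α_m ω_m²` of
`A v̄_m` if `j = m`, and `0` otherwise. -/
theorem stmt8 (m : ℕ) (α : ℝ) (hα : α ^ 2 = 4 * ((m : ℝ) + 1) / 3) (j : ℕ) :
    (1 / Real.pi) * ∫ t in (0:ℝ)..(2 * Real.pi),
        Real.cos (((j : ℝ) + 1) * t) *
          ((2 / Real.pi) * ∫ x in (0:ℝ)..Real.pi,
            (α * Real.cos (((m : ℝ) + 1) * t) * sphEig m x) ^ 3 * sphEig j x *
              Real.sin x ^ 2) =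
      if j = m then α * ((m : ℝ) + 1) ^ 2 else 0 := by
  set C := ∫ x in (0 : ℝ)..π, sphEig m x ^ 3 * sphEig j x * sin x ^ 2 with hC
  have hsep (t : ℝ) : cos (((j : ℝ) + 1) * t) * ((2 / π) * ∫ x in (0 : ℝ)..π,
        (α * cos (((m : ℝ) + 1) * t) * sphEig m x) ^ 3 * sphEig j x * sin x ^ 2)
      = (2 / π * α ^ 3 * C)
        * (cos (((j + 1 : ℕ) : ℝ) * t) * cos (((m + 1 : ℕ) : ℝ) * t) ^ 3) := by
    have hx : ∫ x in (0 : ℝ)..π,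
        (α * cos (((m : ℝ) + 1) * t) * sphEig m x) ^ 3 * sphEig j x * sin x ^ 2
        = (α * cos (((m : ℝ) + 1) * t)) ^ 3 * C := by
      rw [hC, ← intervalIntegral.integral_const_mul]
      exact intervalIntegral.integral_congr fun x _ ↦ by ring
    rw [hx]
    push_cast
    ring
  simp_rw [hsep]
  rw [intervalIntegral.integral_const_mul,
    integral_cos_nat_mul_mul_cos_nat_mul_pow_three (by omega)]
  simp only [Nat.add_right_cancel_iff, show j + 1 = 3 * (m + 1) ↔ j = 3 * m + 2 by omega]
  rcases eq_or_ne j m with rfl | hjm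
  · rw [hC, integral_sphEig_pow_three_mul_self_mul_sin_sq, if_pos rfl, if_pos rfl,
      if_neg (by omega)]
    field_simp
    linear_combination 3 * π * α * hα
  · rw [if_neg hjm, if_neg hjm]
    by_cases hj : j = 3 * m + 2
    · rw [if_pos hj, hC, hj, integral_sphEig_pow_three_mul_sphEig_three_mul_add_two_mul_sin_sq]
      ring
    · rw [if_neg hj]
      ring
end

section
/- Bootstrap regularity: let σ > 0, s > 1/2, r > 3/2, ω > 0, ε ∈ ℝ, and suppose u ∈ X_{σ,s,r} solves -ω²∂_tt u - Au = εu³ where A has eigenvalues ω_j² = (j+1)² on the basis e_j. Then for any 0 < σ̃ < σ, u ∈ X_{σ̃,s,r+2}, with ‖u‖_{σ̃,s,r+2} ≤ 2C‖u‖_{σ,s,r} + εC_{s,r}‖u‖³_{σ,s,r} where C = max{1, sup_{ρ≥0} exp(-ρ(σ-σ̃))⟨ρ⟩²} and C_{s,r} is the algebra constant of X_{σ̃,s,r}. -/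
open Real

private lemma summable_abs_mul' {ι : Type*} {f g : ι → ℝ}
    (hf : Summable fun i => f i ^ 2) (hg : Summable fun i => g i ^ 2) :
    Summable fun i => |f i * g i| := by
  refine Summable.of_nonneg_of_le (fun i => abs_nonneg _) (fun i => ?_)
    ((hf.add hg).div_const 2)
  rw [abs_mul]
  nlinarith [sq_nonneg (|f i| - |g i|), sq_abs (f i), sq_abs (g i),
    abs_nonneg (f i), abs_nonneg (g i)]

private lemma tsum_abs_mul_le' {ι : Type*} {f g : ι → ℝ}
    (hf : Summable fun i => f i ^ 2) (hg : Summable fun i => g i ^ 2) :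
    ∑' i, |f i * g i| ≤ Real.sqrt (∑' i, f i ^ 2) * Real.sqrt (∑' i, g i ^ 2) := by
  refine Summable.tsum_le_of_sum_le (summable_abs_mul' hf hg) fun S => ?_
  have h1 : (∑ i ∈ S, |f i * g i|) ^ 2 ≤ (∑ i ∈ S, f i ^ 2) * ∑ i ∈ S, g i ^ 2 := by
    have := Finset.sum_mul_sq_le_sq_mul_sq S (fun i => |f i|) (fun i => |g i|)
    simpa [← abs_mul, sq_abs] using this
  calc ∑ i ∈ S, |f i * g i|
      = Real.sqrt ((∑ i ∈ S, |f i * g i|) ^ 2) :=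
        (Real.sqrt_sq (Finset.sum_nonneg fun i _ => abs_nonneg _)).symm
    _ ≤ Real.sqrt ((∑ i ∈ S, f i ^ 2) * ∑ i ∈ S, g i ^ 2) := Real.sqrt_le_sqrt h1
    _ = Real.sqrt (∑ i ∈ S, f i ^ 2) * Real.sqrt (∑ i ∈ S, g i ^ 2) :=
        Real.sqrt_mul (Finset.sum_nonneg fun i _ => sq_nonneg _) _
    _ ≤ Real.sqrt (∑' i, f i ^ 2) * Real.sqrt (∑' i, g i ^ 2) := by
        exact mul_le_mul (Real.sqrt_le_sqrt (Summable.sum_le_tsum S (fun i _ => sq_nonneg _) hf))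
          (Real.sqrt_le_sqrt (Summable.sum_le_tsum S (fun i _ => sq_nonneg _) hg))
          (Real.sqrt_nonneg _) (Real.sqrt_nonneg _)

private lemma sqrt_tsum_add_le' {ι : Type*} {f g : ι → ℝ}
    (hf : Summable fun i => f i ^ 2) (hg : Summable fun i => g i ^ 2) :
    Real.sqrt (∑' i, (f i + g i) ^ 2) ≤
      Real.sqrt (∑' i, f i ^ 2) + Real.sqrt (∑' i, g i ^ 2) := by
  have habs := summable_abs_mul' hf hg
  have hfg : Summable fun i => f i * g i := habs.of_abs
  have hA : 0 ≤ ∑' i, f i ^ 2 := tsum_nonneg fun i => sq_nonneg _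
  have hB : 0 ≤ ∑' i, g i ^ 2 := tsum_nonneg fun i => sq_nonneg _
  have hfg_le : ∑' i, f i * g i ≤ Real.sqrt (∑' i, f i ^ 2) * Real.sqrt (∑' i, g i ^ 2) :=
    le_trans (Summable.tsum_le_tsum (fun i => le_abs_self _) hfg habs) (tsum_abs_mul_le' hf hg)
  have expand : ∑' i, (f i + g i) ^ 2
      = ∑' i, f i ^ 2 + (2 * ∑' i, f i * g i + ∑' i, g i ^ 2) := by
    rw [← tsum_mul_left, ← Summable.tsum_add (hfg.mul_left 2) hg,
      ← Summable.tsum_add hf ((hfg.mul_left 2).add hg)]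
    exact tsum_congr fun i => by ring
  have key : ∑' i, (f i + g i) ^ 2
      ≤ (Real.sqrt (∑' i, f i ^ 2) + Real.sqrt (∑' i, g i ^ 2)) ^ 2 := by
    rw [expand]
    nlinarith [hfg_le, Real.sqrt_nonneg (∑' i, f i ^ 2), Real.sqrt_nonneg (∑' i, g i ^ 2),
      Real.sq_sqrt hA, Real.sq_sqrt hB]
  calc Real.sqrt (∑' i, (f i + g i) ^ 2)
      ≤ Real.sqrt ((Real.sqrt (∑' i, f i ^ 2) + Real.sqrt (∑' i, g i ^ 2)) ^ 2) :=
        Real.sqrt_le_sqrt key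
    _ = _ := Real.sqrt_sq (by positivity)



/-- The `X_{σ,s,r}` norm of a function given by its time-space Fourier coefficients
`u : ℤ → ℕ → ℝ` (time frequency `ℓ`, space mode `e_j` with eigenvalue `(j+1)²`):
`‖u‖²_{σ,s,r} = ∑_ℓ e^{2σ|ℓ|} ⟨ℓ⟩^{2s} ∑_j u_{ℓj}² (j+1)^{2r}`. -/
noncomputable def Xnorm (σ s r : ℝ) (u : ℤ → ℕ → ℝ) : ℝ :=
  Real.sqrt (∑' ℓ : ℤ, Real.exp (2 * σ * |(ℓ : ℝ)|) * (max 1 |(ℓ : ℝ)|) ^ (2 * s) *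
    ∑' j : ℕ, u ℓ j ^ 2 * ((j : ℝ) + 1) ^ (2 * r))

/-- bootstrap regularity. Let `u ∈ X_{σ,s,r}` solve
`-ω²∂_tt u - A u = ε u³` with `ω = √(1+ε)`, where `g` denotes the coefficients of `u³`
(satisfying the algebra estimate `‖g‖_{σ̃,s,r} ≤ C_{s,r} ‖u‖³_{σ,s,r}`). Then for
`0 < σ̃ < σ`, `u ∈ X_{σ̃,s,r+2}` with
`‖u‖_{σ̃,s,r+2} ≤ 2C ‖u‖_{σ,s,r} + ε C_{s,r} ‖u‖³_{σ,s,r}`,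
`C = max{1, sup_{ρ≥0} e^{-ρ(σ-σ̃)}⟨ρ⟩²}`. -/
theorem stmt19 (σ σ' s r : ℝ) (hσ' : 0 < σ') (hσ : σ' < σ)
    (hs : 1 / 2 < s) (hr : 3 / 2 < r)
    (ε : ℝ) (hε0 : 0 ≤ ε) (hε1 : ε ≤ 1) (ω : ℝ) (hω : ω = Real.sqrt (1 + ε))
    (u g : ℤ → ℕ → ℝ)
    -- `u` solves `-ω²∂_tt u - A u = ε u³` coefficientwise, `g` being the coefficients of `u³`:
    (heq : ∀ (ℓ : ℤ) (j : ℕ),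
      ((j : ℝ) + 1) ^ 2 * u ℓ j = ω ^ 2 * (ℓ : ℝ) ^ 2 * u ℓ j - ε * g ℓ j)
    -- `u ∈ X_{σ,s,r}`:
    (husum : ∀ ℓ : ℤ, Summable fun j : ℕ => u ℓ j ^ 2 * ((j : ℝ) + 1) ^ (2 * r))
    (huSum : Summable fun ℓ : ℤ => Real.exp (2 * σ * |(ℓ : ℝ)|) * (max 1 |(ℓ : ℝ)|) ^ (2 * s) *
      ∑' j : ℕ, u ℓ j ^ 2 * ((j : ℝ) + 1) ^ (2 * r))
    -- `g = u³ ∈ X_{σ',s,r}` with the algebra estimate `‖u³‖_{σ',s,r} ≤ C_{s,r} ‖u‖³_{σ,s,r}`: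
    (hgsum : ∀ ℓ : ℤ, Summable fun j : ℕ => g ℓ j ^ 2 * ((j : ℝ) + 1) ^ (2 * r))
    (hgSum : Summable fun ℓ : ℤ => Real.exp (2 * σ' * |(ℓ : ℝ)|) * (max 1 |(ℓ : ℝ)|) ^ (2 * s) *
      ∑' j : ℕ, g ℓ j ^ 2 * ((j : ℝ) + 1) ^ (2 * r))
    (Csr : ℝ) (halg : Xnorm σ' s r g ≤ Csr * (Xnorm σ s r u) ^ 3) :
    Xnorm σ' s (r + 2) u ≤
      2 * max 1 (⨆ ρ : Set.Ici (0 : ℝ), Real.exp (-(ρ : ℝ) * (σ - σ')) * (max 1 (ρ : ℝ)) ^ 2) *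
          Xnorm σ s r u
        + ε * Csr * (Xnorm σ s r u) ^ 3 := by
  have hδ : 0 < σ - σ' := by linarith
  set C := max 1 (⨆ ρ : Set.Ici (0 : ℝ),
      Real.exp (-(ρ : ℝ) * (σ - σ')) * (max 1 (ρ : ℝ)) ^ 2) with hCdef
  -- boundedness of the sup
  have hbdd : ∀ ρ : ℝ, 0 ≤ ρ →
      Real.exp (-ρ * (σ - σ')) * (max 1 ρ) ^ 2
        ≤ ((σ - σ') ^ 2 + 2 * (σ - σ') + 4) / (σ - σ') ^ 2 := by
    intro ρ hρ
    set δ := σ - σ' with hδ'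
    clear_value δ
    have core : (max 1 ρ) ^ 2 * δ ^ 2 ≤ (δ ^ 2 + 2 * δ + 4) * Real.exp (ρ * δ) := by
      have h1 : 1 + ρ * δ ≤ Real.exp (ρ * δ) := by
        have := Real.add_one_le_exp (ρ * δ); linarith
      have h2 : (1 + ρ * δ / 2) ^ 2 ≤ Real.exp (ρ * δ) := by
        have e2 : Real.exp (ρ * δ) = Real.exp (ρ * δ / 2) ^ 2 := by
          rw [sq, ← Real.exp_add]; ring_nf
        have h3 : 1 + ρ * δ / 2 ≤ Real.exp (ρ * δ / 2) := by
          have := Real.add_one_le_exp (ρ * δ / 2); linarith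
        rw [e2]
        exact pow_le_pow_left₀ (by positivity) h3 2
      have hm : max 1 ρ ≤ 1 + ρ := max_le (by linarith) (by linarith)
      have hm2 : (max 1 ρ) ^ 2 ≤ (1 + ρ) ^ 2 :=
        pow_le_pow_left₀ (le_trans zero_le_one (le_max_left _ _)) hm 2
      have hd1 : (max 1 ρ) ^ 2 * δ ^ 2 ≤ (1 + ρ) ^ 2 * δ ^ 2 :=
        mul_le_mul_of_nonneg_right hm2 (sq_nonneg δ)
      have hd2 : 2 * δ * (1 + ρ * δ) ≤ 2 * δ * Real.exp (ρ * δ) :=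
        mul_le_mul_of_nonneg_left h1 (by positivity)
      have hd3 : 4 * (1 + ρ * δ / 2) ^ 2 ≤ 4 * Real.exp (ρ * δ) :=
        mul_le_mul_of_nonneg_left h2 (by norm_num)
      have hd4 : δ ^ 2 * 1 ≤ δ ^ 2 * Real.exp (ρ * δ) :=
        mul_le_mul_of_nonneg_left (Real.one_le_exp (by positivity)) (sq_nonneg δ)
      nlinarith [hd1, hd2, hd3, hd4, mul_nonneg hρ hδ.le, hδ.le]
    rw [le_div_iff₀ (by positivity)]
    calc Real.exp (-ρ * δ) * (max 1 ρ) ^ 2 * δ ^ 2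
        = Real.exp (-(ρ * δ)) * ((max 1 ρ) ^ 2 * δ ^ 2) := by rw [show -ρ * δ = -(ρ * δ) by ring]; ring
      _ ≤ Real.exp (-(ρ * δ)) * ((δ ^ 2 + 2 * δ + 4) * Real.exp (ρ * δ)) :=
          mul_le_mul_of_nonneg_left core (Real.exp_pos _).le
      _ = δ ^ 2 + 2 * δ + 4 := by
          rw [show Real.exp (-(ρ * δ)) * ((δ ^ 2 + 2 * δ + 4) * Real.exp (ρ * δ))
              = (Real.exp (-(ρ * δ)) * Real.exp (ρ * δ)) * (δ ^ 2 + 2 * δ + 4) by ring,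
            ← Real.exp_add]
          simp
  have hCge : ∀ ℓ : ℤ, Real.exp (-|(ℓ : ℝ)| * (σ - σ')) * (max 1 |(ℓ : ℝ)|) ^ 2 ≤ C := by
    intro ℓ
    have hb : BddAbove (Set.range fun ρ : Set.Ici (0 : ℝ) =>
        Real.exp (-(ρ : ℝ) * (σ - σ')) * (max 1 (ρ : ℝ)) ^ 2) := by
      refine ⟨((σ - σ') ^ 2 + 2 * (σ - σ') + 4) / (σ - σ') ^ 2, ?_⟩
      rintro x ⟨ρ, rfl⟩
      exact hbdd ρ ρ.2
    exact le_trans (le_ciSup hb ⟨|(ℓ : ℝ)|, Set.mem_Ici.2 (abs_nonneg _)⟩) (le_max_right _ _)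
  have hC1 : (1 : ℝ) ≤ C := le_max_left _ _
  have hC0 : (0 : ℝ) ≤ C := le_trans zero_le_one hC1
  -- the key weight inequality
  have hkey : ∀ ℓ : ℤ, Real.exp (2 * σ' * |(ℓ : ℝ)|) * ((ℓ : ℝ) ^ 2) ^ 2
      ≤ C ^ 2 * Real.exp (2 * σ * |(ℓ : ℝ)|) := by
    intro ℓ
    have h := hCge ℓ
    have hnn : 0 ≤ Real.exp (-|(ℓ : ℝ)| * (σ - σ')) * (max 1 |(ℓ : ℝ)|) ^ 2 := by positivity
    have hsq : (Real.exp (-|(ℓ : ℝ)| * (σ - σ'))) ^ 2 * (max 1 |(ℓ : ℝ)|) ^ 4 ≤ C ^ 2 := by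
      nlinarith [h, hnn]
    have h4 : ((ℓ : ℝ) ^ 2) ^ 2 ≤ (max 1 |(ℓ : ℝ)|) ^ 4 := by
      have hle : |(ℓ : ℝ)| ≤ max 1 |(ℓ : ℝ)| := le_max_right _ _
      calc ((ℓ : ℝ) ^ 2) ^ 2 = |(ℓ : ℝ)| ^ 4 := by rw [← sq_abs ((ℓ:ℝ))]; ring
        _ ≤ _ := pow_le_pow_left₀ (abs_nonneg _) hle 4
    have hexp : Real.exp (2 * σ' * |(ℓ : ℝ)|)
        = Real.exp (2 * σ * |(ℓ : ℝ)|) * (Real.exp (-|(ℓ : ℝ)| * (σ - σ'))) ^ 2 := by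
      rw [sq, ← Real.exp_add, ← Real.exp_add]; congr 1; ring
    have step : (Real.exp (-|(ℓ : ℝ)| * (σ - σ'))) ^ 2 * ((ℓ : ℝ) ^ 2) ^ 2 ≤ C ^ 2 :=
      le_trans (mul_le_mul_of_nonneg_left h4 (sq_nonneg _)) hsq
    calc Real.exp (2 * σ' * |(ℓ : ℝ)|) * ((ℓ : ℝ) ^ 2) ^ 2
        = Real.exp (2 * σ * |(ℓ : ℝ)|) *
            ((Real.exp (-|(ℓ : ℝ)| * (σ - σ'))) ^ 2 * ((ℓ : ℝ) ^ 2) ^ 2) := by rw [hexp]; ring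
      _ ≤ Real.exp (2 * σ * |(ℓ : ℝ)|) * C ^ 2 :=
          mul_le_mul_of_nonneg_left step (Real.exp_pos _).le
      _ = C ^ 2 * Real.exp (2 * σ * |(ℓ : ℝ)|) := mul_comm _ _

  -- ω² = 1 + ε
  have hω2 : ω ^ 2 = 1 + ε := by
    rw [hω, Real.sq_sqrt (by linarith : (0:ℝ) ≤ 1 + ε)]
  -- weights
  set W : ℤ → ℕ → ℝ := fun ℓ j =>
    Real.exp (σ' * |(ℓ : ℝ)|) * (max 1 |(ℓ : ℝ)|) ^ s * ((j : ℝ) + 1) ^ r with hWdef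
  have hW2 : ∀ (ℓ : ℤ) (j : ℕ), (W ℓ j) ^ 2 =
      Real.exp (2 * σ' * |(ℓ : ℝ)|) * (max 1 |(ℓ : ℝ)|) ^ (2 * s) * ((j : ℝ) + 1) ^ (2 * r) := by
    intro ℓ j
    have hb1 : (0:ℝ) ≤ max 1 |(ℓ : ℝ)| := le_trans zero_le_one (le_max_left _ _)
    have hb2 : (0:ℝ) ≤ (j : ℝ) + 1 := by positivity
    have h1 : (Real.exp (σ' * |(ℓ : ℝ)|)) ^ 2 = Real.exp (2 * σ' * |(ℓ : ℝ)|) := by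
      rw [sq, ← Real.exp_add]; congr 1; ring
    have h2 : ((max 1 |(ℓ : ℝ)|) ^ s) ^ 2 = (max 1 |(ℓ : ℝ)|) ^ (2 * s) := by
      rw [← Real.rpow_natCast ((max 1 |(ℓ : ℝ)|) ^ s) 2, ← Real.rpow_mul hb1,
        show s * ((2:ℕ):ℝ) = 2 * s by push_cast; ring]
    have h3 : (((j : ℝ) + 1) ^ r) ^ 2 = ((j : ℝ) + 1) ^ (2 * r) := by
      rw [← Real.rpow_natCast (((j : ℝ) + 1) ^ r) 2, ← Real.rpow_mul hb2,
        show r * ((2:ℕ):ℝ) = 2 * r by push_cast; ring]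
    simp only [hWdef]
    rw [mul_pow, mul_pow, h1, h2, h3]
  -- shifting two powers of (j+1)
  have hshift : ∀ (ℓ : ℤ) (j : ℕ), u ℓ j ^ 2 * ((j : ℝ) + 1) ^ (2 * (r + 2))
      = (((j : ℝ) + 1) ^ 2 * u ℓ j) ^ 2 * ((j : ℝ) + 1) ^ (2 * r) := by
    intro ℓ j
    have hj : (0:ℝ) < (j : ℝ) + 1 := by positivity
    have e1 : (2:ℝ) * (r + 2) = 2 * r + ((4:ℕ):ℝ) := by push_cast; ring
    rw [e1, Real.rpow_add hj, Real.rpow_natCast]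
    ring
  set F : ℤ × ℕ → ℝ := fun p => W p.1 p.2 * (ω ^ 2 * (p.1 : ℝ) ^ 2 * u p.1 p.2) with hFdef
  set H : ℤ × ℕ → ℝ := fun p => W p.1 p.2 * (ε * g p.1 p.2) with hHdef
  have hF2 : ∀ (ℓ : ℤ) (j : ℕ), F (ℓ, j) ^ 2
      = (ω ^ 2 * (ℓ : ℝ) ^ 2) ^ 2 * (Real.exp (2 * σ' * |(ℓ : ℝ)|) * (max 1 |(ℓ : ℝ)|) ^ (2 * s))
        * (u ℓ j ^ 2 * ((j : ℝ) + 1) ^ (2 * r)) := by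
    intro ℓ j
    have : F (ℓ, j) = W ℓ j * (ω ^ 2 * (ℓ : ℝ) ^ 2 * u ℓ j) := rfl
    rw [this, mul_pow, hW2]; ring
  have hH2 : ∀ (ℓ : ℤ) (j : ℕ), H (ℓ, j) ^ 2
      = ε ^ 2 * (Real.exp (2 * σ' * |(ℓ : ℝ)|) * (max 1 |(ℓ : ℝ)|) ^ (2 * s))
        * (g ℓ j ^ 2 * ((j : ℝ) + 1) ^ (2 * r)) := by
    intro ℓ j
    have : H (ℓ, j) = W ℓ j * (ε * g ℓ j) := rfl
    rw [this, mul_pow, hW2]; ring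
  have hFsum1 : ∀ ℓ : ℤ, Summable fun j => F (ℓ, j) ^ 2 := fun ℓ =>
    ((husum ℓ).mul_left ((ω ^ 2 * (ℓ : ℝ) ^ 2) ^ 2 *
      (Real.exp (2 * σ' * |(ℓ : ℝ)|) * (max 1 |(ℓ : ℝ)|) ^ (2 * s)))).congr
      fun j => by rw [hF2]
  have hHsum1 : ∀ ℓ : ℤ, Summable fun j => H (ℓ, j) ^ 2 := fun ℓ =>
    ((hgsum ℓ).mul_left (ε ^ 2 *
      (Real.exp (2 * σ' * |(ℓ : ℝ)|) * (max 1 |(ℓ : ℝ)|) ^ (2 * s)))).congr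
      fun j => by rw [hH2]
  have hFtsum : ∀ ℓ : ℤ, ∑' j : ℕ, F (ℓ, j) ^ 2
      = (ω ^ 2 * (ℓ : ℝ) ^ 2) ^ 2 * (Real.exp (2 * σ' * |(ℓ : ℝ)|) * (max 1 |(ℓ : ℝ)|) ^ (2 * s))
        * (∑' j : ℕ, u ℓ j ^ 2 * ((j : ℝ) + 1) ^ (2 * r)) := by
    intro ℓ
    rw [← tsum_mul_left]
    exact tsum_congr fun j => hF2 ℓ j
  have hHtsum : ∀ ℓ : ℤ, ∑' j : ℕ, H (ℓ, j) ^ 2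
      = ε ^ 2 * (Real.exp (2 * σ' * |(ℓ : ℝ)|) * (max 1 |(ℓ : ℝ)|) ^ (2 * s))
        * (∑' j : ℕ, g ℓ j ^ 2 * ((j : ℝ) + 1) ^ (2 * r)) := by
    intro ℓ
    rw [← tsum_mul_left]
    exact tsum_congr fun j => hH2 ℓ j
  have hFle : ∀ ℓ : ℤ, ∑' j : ℕ, F (ℓ, j) ^ 2
      ≤ ω ^ 4 * C ^ 2 * (Real.exp (2 * σ * |(ℓ : ℝ)|) * (max 1 |(ℓ : ℝ)|) ^ (2 * s) *
          ∑' j : ℕ, u ℓ j ^ 2 * ((j : ℝ) + 1) ^ (2 * r)) := by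
    intro ℓ
    rw [hFtsum ℓ]
    have hIu : 0 ≤ ∑' j : ℕ, u ℓ j ^ 2 * ((j : ℝ) + 1) ^ (2 * r) :=
      tsum_nonneg fun j => by positivity
    have hmax : (0:ℝ) ≤ (max 1 |(ℓ : ℝ)|) ^ (2 * s) :=
      Real.rpow_nonneg (le_trans zero_le_one (le_max_left _ _)) _
    have hnn : (0:ℝ) ≤ ω ^ 4 * ((max 1 |(ℓ : ℝ)|) ^ (2 * s) *
        ∑' j : ℕ, u ℓ j ^ 2 * ((j : ℝ) + 1) ^ (2 * r)) := by
      have : (0:ℝ) ≤ ω ^ 4 := by positivity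
      exact mul_nonneg this (mul_nonneg hmax hIu)
    calc (ω ^ 2 * (ℓ : ℝ) ^ 2) ^ 2 * (Real.exp (2 * σ' * |(ℓ : ℝ)|) * (max 1 |(ℓ : ℝ)|) ^ (2 * s))
          * (∑' j : ℕ, u ℓ j ^ 2 * ((j : ℝ) + 1) ^ (2 * r))
        = (Real.exp (2 * σ' * |(ℓ : ℝ)|) * ((ℓ : ℝ) ^ 2) ^ 2) * (ω ^ 4 *
            ((max 1 |(ℓ : ℝ)|) ^ (2 * s) * ∑' j : ℕ, u ℓ j ^ 2 * ((j : ℝ) + 1) ^ (2 * r))) := by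
          ring
      _ ≤ (C ^ 2 * Real.exp (2 * σ * |(ℓ : ℝ)|)) * (ω ^ 4 *
            ((max 1 |(ℓ : ℝ)|) ^ (2 * s) * ∑' j : ℕ, u ℓ j ^ 2 * ((j : ℝ) + 1) ^ (2 * r))) :=
          mul_le_mul_of_nonneg_right (hkey ℓ) hnn
      _ = ω ^ 4 * C ^ 2 * (Real.exp (2 * σ * |(ℓ : ℝ)|) * (max 1 |(ℓ : ℝ)|) ^ (2 * s) *
            ∑' j : ℕ, u ℓ j ^ 2 * ((j : ℝ) + 1) ^ (2 * r)) := by ring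
  have hFouter : Summable fun ℓ : ℤ => ∑' j : ℕ, F (ℓ, j) ^ 2 :=
    Summable.of_nonneg_of_le (fun ℓ => tsum_nonneg fun j => sq_nonneg _) hFle
      (huSum.mul_left (ω ^ 4 * C ^ 2))
  have hHouter : Summable fun ℓ : ℤ => ∑' j : ℕ, H (ℓ, j) ^ 2 :=
    (hgSum.mul_left (ε ^ 2)).congr fun ℓ => by rw [hHtsum ℓ]; ring
  have hFprod : Summable fun p : ℤ × ℕ => F p ^ 2 := by
    refine (summable_prod_of_nonneg ?_).2 ⟨hFsum1, hFouter⟩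
    intro p; exact sq_nonneg _
  have hHprod : Summable fun p : ℤ × ℕ => H p ^ 2 := by
    refine (summable_prod_of_nonneg ?_).2 ⟨hHsum1, hHouter⟩
    intro p; exact sq_nonneg _
  have hDsum1 : ∀ ℓ : ℤ, Summable fun j => (F (ℓ, j) - H (ℓ, j)) ^ 2 := fun ℓ =>
    Summable.of_nonneg_of_le (fun j => sq_nonneg _)
      (fun j => by nlinarith [sq_nonneg (F (ℓ, j) + H (ℓ, j))])
      (((hFsum1 ℓ).mul_left 2).add ((hHsum1 ℓ).mul_left 2))
  have hDprod : Summable fun p : ℤ × ℕ => (F p - H p) ^ 2 :=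
    Summable.of_nonneg_of_le (fun p => sq_nonneg _)
      (fun p => by nlinarith [sq_nonneg (F p + H p)])
      ((hFprod.mul_left 2).add (hHprod.mul_left 2))
  -- the pointwise identity from the equation
  have hDeq : ∀ (ℓ : ℤ) (j : ℕ), (F (ℓ, j) - H (ℓ, j)) ^ 2
      = Real.exp (2 * σ' * |(ℓ : ℝ)|) * (max 1 |(ℓ : ℝ)|) ^ (2 * s) *
          (u ℓ j ^ 2 * ((j : ℝ) + 1) ^ (2 * (r + 2))) := by
    intro ℓ j
    have hFv : F (ℓ, j) = W ℓ j * (ω ^ 2 * (ℓ : ℝ) ^ 2 * u ℓ j) := rfl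
    have hHv : H (ℓ, j) = W ℓ j * (ε * g ℓ j) := rfl
    calc (F (ℓ, j) - H (ℓ, j)) ^ 2
        = (W ℓ j) ^ 2 * (((j : ℝ) + 1) ^ 2 * u ℓ j) ^ 2 := by
          rw [hFv, hHv, heq ℓ j]; ring
      _ = Real.exp (2 * σ' * |(ℓ : ℝ)|) * (max 1 |(ℓ : ℝ)|) ^ (2 * s) *
          (u ℓ j ^ 2 * ((j : ℝ) + 1) ^ (2 * (r + 2))) := by
          rw [hW2, hshift ℓ j]; ring
  -- identification of the norm
  have hXeq : Xnorm σ' s (r + 2) u = Real.sqrt (∑' p : ℤ × ℕ, (F p - H p) ^ 2) := by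
    unfold Xnorm
    congr 1
    rw [Summable.tsum_prod' hDprod hDsum1]
    refine tsum_congr fun ℓ => ?_
    rw [← tsum_mul_left]
    exact tsum_congr fun j => (hDeq ℓ j).symm
  have hAS : Xnorm σ s r u = Real.sqrt (∑' ℓ : ℤ,
      Real.exp (2 * σ * |(ℓ : ℝ)|) * (max 1 |(ℓ : ℝ)|) ^ (2 * s) *
        ∑' j : ℕ, u ℓ j ^ 2 * ((j : ℝ) + 1) ^ (2 * r)) := rfl
  have hGS : Xnorm σ' s r g = Real.sqrt (∑' ℓ : ℤ,
      Real.exp (2 * σ' * |(ℓ : ℝ)|) * (max 1 |(ℓ : ℝ)|) ^ (2 * s) *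
        ∑' j : ℕ, g ℓ j ^ 2 * ((j : ℝ) + 1) ^ (2 * r)) := rfl
  -- bound for the F part
  have hFB : Real.sqrt (∑' p : ℤ × ℕ, F p ^ 2) ≤ ω ^ 2 * C * Xnorm σ s r u := by
    have hsum : ∑' p : ℤ × ℕ, F p ^ 2 ≤ ω ^ 4 * C ^ 2 * ∑' ℓ : ℤ,
        (Real.exp (2 * σ * |(ℓ : ℝ)|) * (max 1 |(ℓ : ℝ)|) ^ (2 * s) *
          ∑' j : ℕ, u ℓ j ^ 2 * ((j : ℝ) + 1) ^ (2 * r)) := by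
      rw [Summable.tsum_prod' hFprod hFsum1, ← tsum_mul_left]
      exact Summable.tsum_le_tsum hFle hFouter (huSum.mul_left _)
    calc Real.sqrt (∑' p : ℤ × ℕ, F p ^ 2)
        ≤ Real.sqrt (ω ^ 4 * C ^ 2 * ∑' ℓ : ℤ,
            (Real.exp (2 * σ * |(ℓ : ℝ)|) * (max 1 |(ℓ : ℝ)|) ^ (2 * s) *
              ∑' j : ℕ, u ℓ j ^ 2 * ((j : ℝ) + 1) ^ (2 * r))) := Real.sqrt_le_sqrt hsum
      _ = ω ^ 2 * C * Xnorm σ s r u := by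
          rw [hAS, show ω ^ 4 * C ^ 2 = (ω ^ 2 * C) ^ 2 by ring,
            Real.sqrt_mul (sq_nonneg _), Real.sqrt_sq (by positivity)]
  -- bound for the H part
  have hHB : Real.sqrt (∑' p : ℤ × ℕ, H p ^ 2) ≤ ε * (Csr * Xnorm σ s r u ^ 3) := by
    have hsum : ∑' p : ℤ × ℕ, H p ^ 2 = ε ^ 2 * ∑' ℓ : ℤ,
        (Real.exp (2 * σ' * |(ℓ : ℝ)|) * (max 1 |(ℓ : ℝ)|) ^ (2 * s) *
          ∑' j : ℕ, g ℓ j ^ 2 * ((j : ℝ) + 1) ^ (2 * r)) := by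
      rw [Summable.tsum_prod' hHprod hHsum1, ← tsum_mul_left]
      exact tsum_congr fun ℓ => by rw [hHtsum ℓ]; ring
    calc Real.sqrt (∑' p : ℤ × ℕ, H p ^ 2)
        = ε * Xnorm σ' s r g := by
          rw [hsum, Real.sqrt_mul (sq_nonneg ε), Real.sqrt_sq hε0, hGS]
      _ ≤ ε * (Csr * Xnorm σ s r u ^ 3) := mul_le_mul_of_nonneg_left halg hε0
  -- final assembly
  have hA0 : 0 ≤ Xnorm σ s r u := by rw [hAS]; exact Real.sqrt_nonneg _
  have hωle : ω ^ 2 ≤ 2 := by rw [hω2]; linarith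
  have hCA : 0 ≤ C * Xnorm σ s r u := mul_nonneg hC0 hA0
  rw [hXeq]
  calc Real.sqrt (∑' p : ℤ × ℕ, (F p - H p) ^ 2)
      = Real.sqrt (∑' p : ℤ × ℕ, (F p + -H p) ^ 2) := by
        exact congrArg Real.sqrt (tsum_congr fun p => by ring)
    _ ≤ Real.sqrt (∑' p : ℤ × ℕ, F p ^ 2) + Real.sqrt (∑' p : ℤ × ℕ, (-H p) ^ 2) :=
        sqrt_tsum_add_le' hFprod (hHprod.congr fun p => (neg_sq (H p)).symm)
    _ = Real.sqrt (∑' p : ℤ × ℕ, F p ^ 2) + Real.sqrt (∑' p : ℤ × ℕ, H p ^ 2) := by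
        rw [show (∑' p : ℤ × ℕ, (-H p) ^ 2) = ∑' p : ℤ × ℕ, H p ^ 2 from
          tsum_congr fun p => neg_sq _]
    _ ≤ ω ^ 2 * C * Xnorm σ s r u + ε * (Csr * Xnorm σ s r u ^ 3) := add_le_add hFB hHB
    _ ≤ 2 * C * Xnorm σ s r u + ε * Csr * Xnorm σ s r u ^ 3 := by
        nlinarith [mul_le_mul_of_nonneg_right hωle hCA]
end
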